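/- Every nonsingular signature matrix of an affine signature is, up to multiplication by a nonzero complex scalar, a unitary matrix: 𝒢𝒜_n / U(1) = 𝒰𝒜_n / U(1). -/

import Mathlib

open Matrix

/-- The extended vector (x₁,…,x_k,1) over 𝔽₂. -/
def ext {k : ℕ} (x : Fin k → ZMod 2) : Fin (k + 1) → ZMod 2 := Fin.snoc x 1

/-- A function f : {0,1}^k → ℂ is affine if it has the form
λ · χ_{Ax=0} · i^{Σⱼ⟨αⱼ,x⟩} on the extended vector x = (x₁,…,x_k,1). -/
def IsAffine (k : ℕ) (f : (Fin k → ZMod 2) → ℂ) : Prop :=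
  ∃ (lam : ℂ) (m t : ℕ) (A : Matrix (Fin m) (Fin (k + 1)) (ZMod 2))
    (α : Fin t → Fin (k + 1) → ZMod 2),
    ∀ x, f x = lam * (if A.mulVec (ext x) = 0 then 1 else 0) *
      Complex.I ^ ((∑ j, (∑ i, α j i * ext x i).val) % 4)

/-- Assemble the row index (x₁,…,x_n) and column index (x₂ₙ,…,x_{n+1})
into the full argument (x₁,…,x₂ₙ). -/
def assemble {n : ℕ} (x y : Fin n → ZMod 2) : Fin (2 * n) → ZMod 2 :=
  fun i => if h : (i : ℕ) < n then x ⟨i, h⟩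
    else y ⟨2 * n - 1 - i, by have := i.isLt; omega⟩

/-- The signature matrix of an arity-2n signature. -/
def sigMatrix (n : ℕ) (f : (Fin (2 * n) → ZMod 2) → ℂ) :
    Matrix (Fin n → ZMod 2) (Fin n → ZMod 2) ℂ :=
  Matrix.of fun x y => f (assemble x y)

/-- The set 𝒜ₙ of signature matrices of affine signatures of arity 2n. -/
def AffMats (n : ℕ) : Set (Matrix (Fin n → ZMod 2) (Fin n → ZMod 2) ℂ) :=
  {M | ∃ f, IsAffine (2 * n) f ∧ M = sigMatrix n f}

/-!
Write an affine signature as `λ · [A(u x + v y) = 0] · i^{Σⱼ val(aⱼ x + bⱼ y)}` with `v`, `bⱼ`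
additive in the column index `y`. Since `i^{val(p+q)} = i^{val p} i^{val q} (-1)^{pq}` on `𝔽₂`,
the signature matrix is `λ D₁ N D₂` with `D₁, D₂` unitary diagonal and the row `x` of `N` the
`±1`-character `y ↦ (-1)^{Σⱼ aⱼ(x) bⱼ(y)}` restricted to a coset of `K = ker (y ↦ A v y)`.
On a common coset the quotient of two such rows is again a character; its sum over the coset
vanishes unless it is trivial on `K`, and then the two rows are proportional. Nonsingularity rules
out proportional and zero rows, so `N Nᴴ = |K| · 1`, and `M / (|λ| √|K|)` is unitary and affine.
-/

open Finset

theorem LinearIndependent.ne_smul {ι R M : Type*} [Ring R] [Nontrivial R] [AddCommGroup M]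
    [Module R M] {v : ι → M} (hv : LinearIndependent R v) {i j : ι} (hij : i ≠ j) (c : R) :
    v i ≠ c • v j := by
  intro h
  have := (LinearIndepOn.pair_iff v hij).mp (hv.linearIndepOn _) 1 (-c) (by simp [h])
  exact one_ne_zero this.1

section FiberCharMatrix

variable {X Y G : Type*} [AddCommGroup Y] [AddCommGroup G] [DecidableEq G]

def fiberCharMatrix (Φ : Y →+ G) (c : X → G) (χ : X → AddChar Y ℂ) : Matrix X Y ℂ :=
  of fun x y => if Φ y = c x then χ x y else 0

variable (Φ : Y →+ G) (c : X → G) (χ : X → AddChar Y ℂ)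

theorem fiberCharMatrix_row_eq_smul {x x' : X} {y₀ : Y} (hy₀ : Φ y₀ = c x) (hc : c x = c x')
    (htriv : ∀ d, Φ d = 0 → (χ x / χ x') d = 1) :
    (fiberCharMatrix Φ c χ).row x = (χ x / χ x') y₀ • (fiberCharMatrix Φ c χ).row x' := by
  funext y
  simp only [row, fiberCharMatrix, of_apply, Pi.smul_apply, smul_eq_mul, ← hc]
  split_ifs with hy
  · have hker : Φ (y - y₀) = 0 := by rw [map_sub, hy, hy₀, sub_self]
    have hconst : (χ x / χ x') y = (χ x / χ x') y₀ := by
      rw [← add_sub_cancel y₀ y, AddChar.map_add_eq_mul, htriv _ hker, mul_one]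
    rw [← hconst, AddChar.div_apply', div_mul_cancel₀ _ ((χ x').val_isUnit y).ne_zero]
  · rw [mul_zero]

variable [Fintype Y]

theorem sum_fiber_addChar_eq_zero (g : G) (ψ : AddChar Y ℂ) {d : Y}
    (hd : Φ d = 0) (hψ : ψ d ≠ 1) : ∑ y with Φ y = g, ψ y = 0 := by
  set S := ∑ y with Φ y = g, ψ y
  have hshift : S = ψ d * S := by
    simp only [S, sum_filter, mul_sum]
    rw [← Equiv.sum_comp (Equiv.addRight d)]
    refine sum_congr rfl fun y _ => ?_
    simp [hd, AddChar.map_add_eq_mul, mul_comm]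
  have : (1 - ψ d) * S = 0 := by linear_combination hshift
  exact (mul_eq_zero.mp this).resolve_left (sub_ne_zero.mpr hψ.symm)

theorem fiberCharMatrix_mul_conjTranspose_apply (x x' : X) :
    (fiberCharMatrix Φ c χ * (fiberCharMatrix Φ c χ)ᴴ) x x' =
      ∑ y with Φ y = c x ∧ Φ y = c x', (χ x / χ x') y := by
  simp only [mul_apply, conjTranspose_apply, fiberCharMatrix, of_apply, sum_filter]
  refine sum_congr rfl fun y _ => ?_
  by_cases hx : Φ y = c x
  · by_cases hx' : Φ y = c x'
    · rw [if_pos hx, if_pos hx', if_pos ⟨hx, hx'⟩, AddChar.div_apply, AddChar.map_neg_eq_conj]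
      rfl
    · simp [hx']
  · simp [hx]

variable [DecidableEq X]

theorem fiberCharMatrix_mul_conjTranspose (h : LinearIndependent ℂ (fiberCharMatrix Φ c χ).row) :
    fiberCharMatrix Φ c χ * (fiberCharMatrix Φ c χ)ᴴ = (#{y | Φ y = 0} : ℂ) • 1 := by
  have hrange : ∀ x, c x ∈ Set.range Φ := by
    intro x
    obtain ⟨y, hy⟩ := Function.ne_iff.mp (h.ne_zero x)
    by_contra hx
    exact hy (if_neg fun hyx => hx ⟨y, hyx⟩)
  ext x x'
  rw [fiberCharMatrix_mul_conjTranspose_apply, Matrix.smul_apply, one_apply]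
  split_ifs with hxx
  · subst hxx
    simp [AddMonoidHom.card_fiber_eq_of_mem_range Φ (hrange x) ⟨0, map_zero Φ⟩]
  rw [smul_zero]
  by_cases hc : c x = c x'
  · simp only [← hc, and_self]
    obtain ⟨y₀, hy₀⟩ := hrange x
    obtain ⟨d, hd, hψd⟩ : ∃ d, Φ d = 0 ∧ (χ x / χ x') d ≠ 1 := by
      by_contra! htriv
      exact h.ne_smul hxx _ (fiberCharMatrix_row_eq_smul Φ c χ hy₀ hc htriv)
    exact sum_fiber_addChar_eq_zero Φ _ _ hd hψd
  · refine sum_eq_zero fun y hy => absurd ?_ hc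
    obtain ⟨hx, hx'⟩ := (mem_filter.mp hy).2
    exact hx.symm.trans hx'

end FiberCharMatrix

def signChar : AddChar (ZMod 2) ℂ where
  toFun p := (-1) ^ p.val
  map_zero_eq_one' := by simp
  map_add_eq_mul' p q := by rw [← pow_add, ZMod.val_add, ← neg_one_pow_eq_pow_mod_two]

theorem AddChar.map_sum_eq_prod {ι A M : Type*} [AddCommMonoid A] [CommMonoid M]
    (ψ : AddChar A M) (s : Finset ι) (f : ι → A) : ψ (∑ i ∈ s, f i) = ∏ i ∈ s, ψ (f i) :=
  map_prod ψ.toMonoidHom (fun i => Multiplicative.ofAdd (f i)) s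

theorem I_pow_val_add (p q : ZMod 2) :
    Complex.I ^ (p + q).val = Complex.I ^ p.val * Complex.I ^ q.val * signChar (p * q) := by
  have hval : (p + q).val + 2 * (p * q).val = p.val + q.val := by revert p q; decide
  have hle : (p * q).val < 2 := ZMod.val_lt _
  show _ = Complex.I ^ p.val * Complex.I ^ q.val * (-1) ^ (p * q).val
  rw [← pow_add, ← hval, pow_add, pow_mul, Complex.I_sq, mul_assoc, ← pow_add]
  interval_cases (p * q).val <;> norm_num

theorem I_pow_sum_val_add {J : Type*} [Fintype J] (p q : J → ZMod 2) :
    Complex.I ^ (∑ j, (p j + q j).val) =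
      Complex.I ^ (∑ j, (p j).val) * Complex.I ^ (∑ j, (q j).val) * signChar (p ⬝ᵥ q) := by
  simp only [← prod_pow_eq_pow_sum, I_pow_val_add, prod_mul_distrib, dotProduct,
    AddChar.map_sum_eq_prod]

theorem diagonal_I_pow_mem_unitaryGroup {ι : Type*} [Fintype ι] [DecidableEq ι] (e : ι → ℕ) :
    diagonal (fun i => Complex.I ^ e i) ∈ unitaryGroup ι ℂ := by
  rw [mem_unitaryGroup_iff, star_eq_conjTranspose, diagonal_conjTranspose, diagonal_mul_diagonal]
  convert diagonal_one with i
  simp [← mul_pow]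

theorem Fin.snoc_add_snoc {k : ℕ} {α : Type*} [Add α] (z w : Fin k → α) (a b : α) :
    (Fin.snoc z a + Fin.snoc w b : Fin (k + 1) → α) = Fin.snoc (z + w) (a + b) := by
  funext i
  refine Fin.lastCases ?_ (fun i => ?_) i <;> simp

theorem assemble_add {n : ℕ} (x x' y y' : Fin n → ZMod 2) :
    assemble (x + x') (y + y') = assemble x y + assemble x' y' := by
  funext i
  simp only [assemble, Pi.add_apply]
  split_ifs <;> rfl

def extColHom (n : ℕ) : (Fin n → ZMod 2) →+ (Fin (2 * n + 1) → ZMod 2) :=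
  AddMonoidHom.mk' (fun y => Fin.snoc (assemble 0 y) 0) fun y y' => by
    rw [Fin.snoc_add_snoc, ← assemble_add, add_zero, add_zero]

theorem ext_assemble {n : ℕ} (x y : Fin n → ZMod 2) :
    ext (assemble x y) = ext (assemble x 0) + extColHom n y := by
  rw [extColHom, AddMonoidHom.mk'_apply, _root_.ext, _root_.ext, Fin.snoc_add_snoc,
    ← assemble_add, add_zero, zero_add, add_zero]

theorem IsAffine.exists_sigMatrix_eq_smul_fiberCharMatrix {n : ℕ}
    {f : (Fin (2 * n) → ZMod 2) → ℂ} (hf : IsAffine (2 * n) f) :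
    ∃ (lam : ℂ) (m : ℕ) (Φ : (Fin n → ZMod 2) →+ (Fin m → ZMod 2))
      (c : (Fin n → ZMod 2) → Fin m → ZMod 2)
      (χ : (Fin n → ZMod 2) → AddChar (Fin n → ZMod 2) ℂ)
      (U V : Matrix (Fin n → ZMod 2) (Fin n → ZMod 2) ℂ),
      U ∈ unitaryGroup (Fin n → ZMod 2) ℂ ∧ V ∈ unitaryGroup (Fin n → ZMod 2) ℂ ∧
        sigMatrix n f = lam • (U * fiberCharMatrix Φ c χ * V) := by
  obtain ⟨lam, m, t, A, α, hf⟩ := hf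
  let u (x : Fin n → ZMod 2) := ext (assemble x 0)
  let Φ := (Matrix.mulVecLin A).toAddMonoidHom.comp (extColHom n)
  let b := (Matrix.mulVecLin α).toAddMonoidHom.comp (extColHom n)
  let β x : (Fin n → ZMod 2) →+ ZMod 2 :=
    AddMonoidHom.mk' (fun y => (α *ᵥ u x) ⬝ᵥ b y) fun y y' => by rw [map_add, dotProduct_add]
  refine ⟨lam, m, Φ, fun x => -(A *ᵥ u x),
    fun x => signChar.compAddMonoidHom (β x),
    diagonal fun x => Complex.I ^ ∑ j, ((α *ᵥ u x) j).val,
    diagonal fun y => Complex.I ^ ∑ j, (b y j).val,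
    diagonal_I_pow_mem_unitaryGroup _, diagonal_I_pow_mem_unitaryGroup _, ?_⟩
  ext x y
  have hsplit : ext (assemble x y) = u x + extColHom n y := ext_assemble x y
  have hsupp : A *ᵥ ext (assemble x y) = 0 ↔ Φ y = -(A *ᵥ u x) := by
    rw [hsplit, mulVec_add, add_comm, add_eq_zero_iff_eq_neg]
    rfl
  have hphase : Complex.I ^ ((∑ j, (∑ i, α j i * ext (assemble x y) i).val) % 4) =
      Complex.I ^ (∑ j, ((α *ᵥ u x) j + b y j).val) := by
    simp only [← Complex.I_pow_eq_pow_mod, hsplit, Pi.add_apply, mul_add, sum_add_distrib]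
    rfl
  rw [sigMatrix, of_apply, hf, hphase, I_pow_sum_val_add, Matrix.smul_apply, mul_diagonal,
    diagonal_mul, fiberCharMatrix, of_apply]
  simp only [hsupp]
  split_ifs
  · simp only [AddChar.compAddMonoidHom_apply, β, AddMonoidHom.mk'_apply]
    ring
  · ring

section ScaledUnitary

variable {ι : Type*} [Fintype ι] [DecidableEq ι]

theorem isUnit_of_isUnit_smul_mul_mul {U N V : Matrix ι ι ℂ} {lam : ℂ}
    (h : IsUnit (lam • (U * N * V))) : IsUnit N := by
  simp only [isUnit_iff_isUnit_det, det_smul, det_mul, isUnit_iff_ne_zero, ne_eq, mul_eq_zero,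
    not_or] at h ⊢
  exact h.2.1.2

theorem smul_unitary_mul_mul_unitary_mul_conjTranspose {U N V : Matrix ι ι ℂ}
    (hU : U ∈ unitaryGroup ι ℂ) (hV : V ∈ unitaryGroup ι ℂ) (lam k : ℂ) (hN : N * Nᴴ = k • 1) :
    lam • (U * N * V) * (lam • (U * N * V))ᴴ = (lam * star lam * k) • 1 := by
  have hU' : U * Uᴴ = 1 := mem_unitaryGroup_iff.mp hU
  have hV' : V * Vᴴ = 1 := mem_unitaryGroup_iff.mp hV
  calc lam • (U * N * V) * (lam • (U * N * V))ᴴ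
      = (lam * star lam) • (U * (N * (V * Vᴴ) * Nᴴ) * Uᴴ) := by
        simp only [conjTranspose_smul, conjTranspose_mul, Matrix.smul_mul, Matrix.mul_smul,
          smul_smul, Matrix.mul_assoc, mul_comm (star lam)]
    _ = (lam * star lam * k) • 1 := by
        rw [hV', Matrix.mul_one, hN, Matrix.mul_smul, Matrix.mul_one, Matrix.smul_mul, hU',
          smul_smul]

theorem inv_sqrt_smul_mul_conjTranspose_eq_one {M : Matrix ι ι ℂ} {r : ℝ} (hr : 0 < r)
    (h : M * Mᴴ = (r : ℂ) • 1) :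
    (((√r)⁻¹ : ℝ) : ℂ) • M * ((((√r)⁻¹ : ℝ) : ℂ) • M)ᴴ = 1 := by
  have hscalar : (√r)⁻¹ * (√r)⁻¹ * r = 1 := by
    rw [← mul_inv, Real.mul_self_sqrt hr.le, inv_mul_cancel₀ hr.ne']
  rw [conjTranspose_smul, Matrix.smul_mul, Matrix.mul_smul, h, smul_smul, smul_smul,
    Complex.star_def, Complex.conj_ofReal, ← Complex.ofReal_mul, ← Complex.ofReal_mul, mul_assoc,
    ← mul_assoc _ _ r, hscalar]
  simp

end ScaledUnitary

theorem IsAffine.exists_sigMatrix_mul_conjTranspose_eq_smul_one {n : ℕ}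
    {f : (Fin (2 * n) → ZMod 2) → ℂ} (hf : IsAffine (2 * n) f) (hU : IsUnit (sigMatrix n f)) :
    ∃ r : ℝ, 0 < r ∧ sigMatrix n f * (sigMatrix n f)ᴴ = (r : ℂ) • 1 := by
  obtain ⟨lam, m, Φ, c, χ, U, V, hU', hV', hM⟩ := hf.exists_sigMatrix_eq_smul_fiberCharMatrix
  rw [hM] at hU ⊢
  have hlam : lam ≠ 0 := by
    rintro rfl
    simp at hU
  have hN := fiberCharMatrix_mul_conjTranspose Φ c χ
    (linearIndependent_rows_of_isUnit (isUnit_of_isUnit_smul_mul_mul hU))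
  have hker : 0 < #{y | Φ y = 0} := card_pos.mpr ⟨0, by simp⟩
  refine ⟨Complex.normSq lam * #{y | Φ y = 0},
    mul_pos (Complex.normSq_pos.mpr hlam) (by exact_mod_cast hker), ?_⟩
  rw [smul_unitary_mul_mul_unitary_mul_conjTranspose hU' hV' lam _ hN, Complex.star_def,
    Complex.mul_conj]
  push_cast
  rfl

theorem IsAffine.const_smul {k : ℕ} {f : (Fin k → ZMod 2) → ℂ} (hf : IsAffine k f) (a : ℂ) :
    IsAffine k (a • f) := by
  obtain ⟨lam, m, t, A, α, hf⟩ := hf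
  exact ⟨a * lam, m, t, A, α, fun x => by rw [Pi.smul_apply, hf, smul_eq_mul]; ring⟩

theorem sigMatrix_smul (n : ℕ) (f : (Fin (2 * n) → ZMod 2) → ℂ) (a : ℂ) :
    sigMatrix n (a • f) = a • sigMatrix n f :=
  rfl

/-- 𝒢𝒜ₙ/U(1) = 𝒰𝒜ₙ/U(1): every nonsingular affine signature matrix is,
up to a nonzero complex scalar, unitary; and every unitary affine signature
matrix is nonsingular. -/
theorem GA_eq_UA (n : ℕ) :
    (∀ M ∈ AffMats n, IsUnit M →
      ∃ c : ℂ, c ≠ 0 ∧ c • M ∈ AffMats n ∧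
        (c • M) * (c • M)ᴴ = 1 ∧ (c • M)ᴴ * (c • M) = 1) ∧
    (∀ M ∈ AffMats n, M * Mᴴ = 1 → Mᴴ * M = 1 → IsUnit M) := by
  refine ⟨?_, fun M _ hMM _ => IsUnit.of_mul_eq_one _ hMM⟩
  rintro _ ⟨f, hf, rfl⟩ hU
  obtain ⟨r, hr, hMM⟩ := hf.exists_sigMatrix_mul_conjTranspose_eq_smul_one hU
  have hunit := inv_sqrt_smul_mul_conjTranspose_eq_one hr hMM
  refine ⟨((√r)⁻¹ : ℝ), by simpa using (Real.sqrt_pos.mpr hr).ne',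
    ⟨_, hf.const_smul _, sigMatrix_smul n f _⟩, hunit, mul_eq_one_comm.mp hunit⟩
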